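/- Suppose x, y, z ≥ 2 are coprime integers with x^p + y^q = z^r for integers p, q, r ≥ 3, and suppose log(z^r) < G^(1/3 + 15/log log G) where G = rad(xyz). Then (3·log log(z^r)/log(z^r)) · 1/(1 + 45/log log G) < 1/p + 1/q + 1/r. -/
import Mathlib


def rad (n : ℕ) : ℕ := ∏ p ∈ n.primeFactors, p

theorem stmt_4 (x y z p q r : ℕ) (hx : 2 ≤ x) (hy : 2 ≤ y) (hz : 2 ≤ z)
    (hcop : Nat.gcd (Nat.gcd x y) z = 1)
    (hp : 3 ≤ p) (hq : 3 ≤ q) (hr : 3 ≤ r)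
    (heq : x ^ p + y ^ q = z ^ r)
    (hG : 0 < Real.log (Real.log (rad (x * y * z))))
    (hWong : Real.log ((z : ℝ) ^ r) <
      (rad (x * y * z) : ℝ) ^ ((1 / 3 : ℝ) + 15 / Real.log (Real.log (rad (x * y * z))))) :
    (3 * Real.log (Real.log ((z : ℝ) ^ r)) / Real.log ((z : ℝ) ^ r)) *
      (1 / (1 + 45 / Real.log (Real.log (rad (x * y * z))))) <
      1 / (p : ℝ) + 1 / (q : ℝ) + 1 / (r : ℝ) := by
  set G : ℕ := rad (x * y * z) with hGdef
  set t : ℝ := Real.log (Real.log G) with htdef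
  set L : ℝ := Real.log ((z : ℝ) ^ r) with hLdef
  have hx1 : (1 : ℝ) < (x : ℝ) := by exact_mod_cast lt_of_lt_of_le one_lt_two hx
  have hy1 : (1 : ℝ) < (y : ℝ) := by exact_mod_cast lt_of_lt_of_le one_lt_two hy
  have hz1 : (1 : ℝ) < (z : ℝ) := by exact_mod_cast lt_of_lt_of_le one_lt_two hz
  have hp0 : (0 : ℝ) < (p : ℝ) := by
    have : 0 < p := by omega
    exact_mod_cast this
  have hq0 : (0 : ℝ) < (q : ℝ) := by
    have : 0 < q := by omega
    exact_mod_cast this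
  have hr0 : (0 : ℝ) < (r : ℝ) := by
    have : 0 < r := by omega
    exact_mod_cast this
  -- L > 0
  have hL0 : 0 < L := by
    rw [hLdef]
    apply Real.log_pos
    exact one_lt_pow₀ hz1 (by omega)
  -- G positive, G ≤ x*y*z
  have hGpos : 0 < G := by
    rw [hGdef]
    unfold rad
    exact Finset.prod_pos fun s hs => (Nat.prime_of_mem_primeFactors hs).pos
  have hGle : G ≤ x * y * z := by
    rw [hGdef]
    exact Nat.le_of_dvd (by positivity) (Nat.prod_primeFactors_dvd _)
  -- log x ≤ L / p etc.
  have hxp : ((x : ℝ)) ^ p ≤ (z : ℝ) ^ r := by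
    have : x ^ p ≤ z ^ r := heq ▸ Nat.le_add_right _ _
    exact_mod_cast this
  have hyq : ((y : ℝ)) ^ q ≤ (z : ℝ) ^ r := by
    have : y ^ q ≤ z ^ r := heq ▸ Nat.le_add_left _ _
    exact_mod_cast this
  have hzr : ((z : ℝ)) ^ r ≤ (z : ℝ) ^ r := le_refl _
  have hlx : Real.log x ≤ L / p := by
    have h := Real.log_le_log (by positivity) hxp
    rw [Real.log_pow] at h
    rw [le_div_iff₀ hp0, mul_comm, hLdef]
    exact h
  have hly : Real.log y ≤ L / q := by
    have h := Real.log_le_log (by positivity) hyq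
    rw [Real.log_pow] at h
    rw [le_div_iff₀ hq0, mul_comm, hLdef]
    exact h
  have hlz : Real.log z ≤ L / r := by
    have h : Real.log ((z : ℝ) ^ r) = r * Real.log z := by rw [Real.log_pow]
    rw [le_div_iff₀ hr0, mul_comm, hLdef, h]
  -- log G ≤ s * L
  have hlogG : Real.log G ≤ (1 / (p : ℝ) + 1 / q + 1 / r) * L := by
    have h1 : Real.log G ≤ Real.log ((x : ℝ) * y * z) := by
      apply Real.log_le_log (by exact_mod_cast hGpos)
      exact_mod_cast hGle
    have h2 : Real.log ((x : ℝ) * y * z) = Real.log x + Real.log y + Real.log z := by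
      rw [Real.log_mul (by positivity) (by positivity),
        Real.log_mul (by positivity) (by positivity)]
    have h3 : Real.log G ≤ L / p + L / q + L / r := by
      rw [h2] at h1; linarith
    calc Real.log G ≤ L / p + L / q + L / r := h3
      _ = (1 / (p : ℝ) + 1 / q + 1 / r) * L := by ring
  -- Wong: log L < (1/3 + 15/t) * log G
  have hwong : Real.log L < ((1 / 3 : ℝ) + 15 / t) * Real.log G := by
    have := Real.log_lt_log hL0 hWong
    rwa [Real.log_rpow (by exact_mod_cast hGpos)] at this
  -- positivity of coefficient
  have ht0 : 0 < t := hG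
  have hα : (0 : ℝ) < (1 / 3 : ℝ) + 15 / t := by positivity
  have hkey : Real.log L < ((1 / 3 : ℝ) + 15 / t) * ((1 / (p : ℝ) + 1 / q + 1 / r) * L) :=
    hwong.trans_le (mul_le_mul_of_nonneg_left hlogG hα.le)
  -- rearrange the goal
  have hden : (0 : ℝ) < 1 + 45 / t := by positivity
  have heqn : (3 * Real.log L / L) * (1 / (1 + 45 / t)) =
      Real.log L / (((1 / 3 : ℝ) + 15 / t) * L) := by
    field_simp
    ring
  rw [heqn, div_lt_iff₀ (by positivity)]
  calc Real.log L < ((1 / 3 : ℝ) + 15 / t) * ((1 / (p : ℝ) + 1 / q + 1 / r) * L) := hkey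
    _ = (1 / (p : ℝ) + 1 / q + 1 / r) * (((1 / 3 : ℝ) + 15 / t) * L) := by ring
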